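/- arXiv:2411.04019 — 2 statements merged into one kernel-verified Lean document; each statement's English description precedes it below -/
import Mathlib

section
/- Under the bijection σ ↦ s^σ between S_n and lower exceeding sequences, a permutation h belongs to the stabilizer H_l of a monotone list l if and only if s^h ∈ LES_l, i.e., min{j : l_j = l_i} ≤ s^h_i ≤ max{j : l_j = l_i} for all i. -/
/-!
Write `g = h⁻¹`. The set counted by `s^h_i` is mapped injectively by `g` into `[0, g i]`, so
`s^h_i ≤ g i + 1` always. If `g` preserves `l`, every `j` below the block of `i` has
`l (g j) < l (g i)`, hence `g j < g i`, giving `s^h_i ≥ min + 1`, while `g i` stays in the block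
of `i`, giving `s^h_i ≤ max + 1`. Conversely the lower bounds force `min ≤ g i`, i.e.
`l i ≤ l (g i)` for every `i`; since `∑ l ∘ g = ∑ l`, all these inequalities are equalities.
-/

open Finset

/-- The lower exceeding sequence `s^σ`, with `0`-indexed arguments and `1`-indexed values. -/
def lowerExceedingSeq {n : ℕ} (σ : Equiv.Perm (Fin n)) (i : Fin n) : ℕ :=
  (univ.filter fun j => σ⁻¹ j ≤ σ⁻¹ i ∧ j ≤ i).card

theorem Equiv.Perm.apply_eq_of_le_apply {ι M : Type*} [Fintype ι] [AddCommMonoid M]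
    [PartialOrder M] [IsOrderedCancelAddMonoid M] (f : ι → M) (σ : Equiv.Perm ι)
    (hle : ∀ i, f i ≤ f (σ i)) (i : ι) : f (σ i) = f i :=
  ((sum_eq_sum_iff_of_le fun i _ => hle i).1 (σ.sum_comp univ f (by simp)).symm i
    (mem_univ i)).symm

section

variable {n : ℕ} (σ : Equiv.Perm (Fin n))

theorem lowerExceedingSeq_le (i : Fin n) : lowerExceedingSeq σ i ≤ (σ⁻¹ i).1 + 1 := by
  have hmaps : Set.MapsTo ⇑σ⁻¹ (univ.filter fun j => σ⁻¹ j ≤ σ⁻¹ i ∧ j ≤ i) (Iic (σ⁻¹ i)) :=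
    fun j hj => mem_Iic.2 (mem_filter.1 hj).2.1
  simpa [lowerExceedingSeq] using card_le_card_of_injOn _ hmaps σ⁻¹.injective.injOn

variable {l : Fin n → ℤ} {i k : Fin n}

theorem succ_le_lowerExceedingSeq (hl : Monotone l) (hσ : ∀ j, l (σ⁻¹ j) = l j)
    (hk : IsLeast {j | l j = l i} k) : k.1 + 1 ≤ lowerExceedingSeq σ i := by
  have hki : k ≤ i := hk.2 rfl
  have hsub : insert i (Iio k) ⊆ univ.filter fun j => σ⁻¹ j ≤ σ⁻¹ i ∧ j ≤ i := by
    intro j hj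
    rcases mem_insert.1 hj with rfl | hjk
    · simp
    · rw [mem_Iio] at hjk
      have hlj : l j < l i :=
        (hl hjk.le).trans_eq hk.1 |>.lt_of_ne fun heq => (hk.2 heq).not_gt hjk
      have hσj : σ⁻¹ j < σ⁻¹ i := hl.reflect_lt (by rwa [hσ, hσ])
      simpa using ⟨hσj.le, (hjk.trans_le hki).le⟩
  have hcard := card_le_card hsub
  rwa [card_insert_of_notMem (by simpa using hki), Fin.card_Iio] at hcard

end

/-- Under the bijection `σ ↦ s^σ`, a permutation `h` stabilizes the monotone
list `l` iff `s^h ∈ LES_l`, i.e. `min{j : l j = l i} ≤ s^h_i ≤ max{j : l j = l i}`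
for all `i` (values 1-indexed). -/
theorem stabilizer_iff_LESl (n : ℕ) (l : Fin n → ℤ) (hl : Monotone l)
    (a b : Fin n → Fin n)
    (ha : ∀ i, IsLeast {j | l j = l i} (a i))
    (hb : ∀ i, IsGreatest {j | l j = l i} (b i))
    (h : Equiv.Perm (Fin n)) :
    (∀ i, l (h⁻¹ i) = l i) ↔
      (∀ i : Fin n,
        (a i).1 + 1 ≤ (Finset.univ.filter fun j => h⁻¹ j ≤ h⁻¹ i ∧ j ≤ i).card ∧
        (Finset.univ.filter fun j => h⁻¹ j ≤ h⁻¹ i ∧ j ≤ i).card ≤ (b i).1 + 1) := by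
  change _ ↔ ∀ i, (a i).1 + 1 ≤ lowerExceedingSeq h i ∧ lowerExceedingSeq h i ≤ (b i).1 + 1
  constructor
  · intro hstab i
    have hbi : h⁻¹ i ≤ b i := (hb i).2 (hstab i)
    exact ⟨succ_le_lowerExceedingSeq h hl hstab (ha i),
      (lowerExceedingSeq_le h i).trans (by simpa using Fin.le_def.1 hbi)⟩
  · intro hles
    have hlow : ∀ i, l i ≤ l (h⁻¹ i) := fun i => by
      have hai : a i ≤ h⁻¹ i := Fin.le_def.2 (by linarith [(hles i).1, lowerExceedingSeq_le h i])
      exact (ha i).1.symm.le.trans (hl hai)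
    exact Equiv.Perm.apply_eq_of_le_apply l h⁻¹ hlow
end

section
/- The prefix-sum recursion is correct: applying log₂ n layers of the doubling subroutine D (where at layer i, for each block of length 2^i, every entry in the second half of the block is incremented by the value currently stored at the midpoint of the block) transforms an input array (d_1,...,d_n), with n a power of 2, into its array of prefix sums (d_1, d_1+d_2, ..., d_1+⋯+d_n). -/
/-!
After `i` layers, position `p` holds the sum of `d` from the start `p - p % 2^i` of its
length-`2^i` block up to `p`. Layer `i + 1` leaves the first half of each length-`2^(i+1)`
block alone; to a position in the second half it adds the value at the midpoint, which is
the last position of the first half and so already holds the sum of that whole half.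
With `p < 2^k`, after `k` layers the block of `p` starts at `0`.
-/

/-- One layer of the doubling prefix-sum subroutine `D` (0-indexed): in layer
`i`, every position `p` lying in the second half of its length-`2^i` block is
incremented by the value at the midpoint of the block. -/
def prefixLayer (i : ℕ) (d : ℕ → ℤ) : ℕ → ℤ := fun p =>
  if 2 ^ (i - 1) ≤ p % 2 ^ i then
    d p + d (p - p % 2 ^ i + 2 ^ (i - 1) - 1)
  else d p

namespace Nat

theorem mod_eq_mod_mul_two_of_lt {p b : ℕ} (h : p % (b * 2) < b) : p % b = p % (b * 2) := by
  rw [← Nat.mod_mul_right_mod p b 2, Nat.mod_eq_of_lt h]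

theorem mod_eq_mod_mul_two_sub_of_le {p b : ℕ} (h : b ≤ p % (b * 2)) :
    p % b = p % (b * 2) - b := by
  rcases Nat.eq_zero_or_pos b with rfl | hb
  · simp
  have hlt : p % (b * 2) < b * 2 := Nat.mod_lt p (by omega)
  rw [← Nat.mod_mul_right_mod p b 2, Nat.mod_eq_sub_mod h, Nat.mod_eq_of_lt (by omega)]

theorem add_sub_one_mod_of_dvd {b c : ℕ} (hb : 0 < b) (hc : b ∣ c) : (c + b - 1) % b = b - 1 := by
  obtain ⟨a, rfl⟩ := hc
  rw [show b * a + b - 1 = b - 1 + b * a by omega, Nat.add_mul_mod_self_left,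
    Nat.mod_eq_of_lt (by omega)]

end Nat

def prefixLayers (k : ℕ) (d : ℕ → ℤ) : ℕ → ℤ :=
  (List.range k).foldl (fun acc i => prefixLayer (i + 1) acc) d

theorem prefixLayers_succ (i : ℕ) (d : ℕ → ℤ) :
    prefixLayers (i + 1) d = prefixLayer (i + 1) (prefixLayers i d) := by
  simp [prefixLayers, List.range_succ]

theorem prefixLayers_apply (i : ℕ) (d : ℕ → ℤ) (p : ℕ) :
    prefixLayers i d p = ∑ q ∈ Finset.Ico (p - p % 2 ^ i) (p + 1), d q := by
  induction i generalizing p with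
  | zero => simp [prefixLayers, Nat.mod_one]
  | succ i ih =>
    have hb : 0 < 2 ^ i := by positivity
    rw [prefixLayers_succ, prefixLayer, Nat.add_sub_cancel, pow_succ]
    split_ifs with h
    · set r := p % (2 ^ i * 2)
      have hr : r ≤ p := Nat.mod_le p _
      have hmid : (p - r + 2 ^ i - 1) % 2 ^ i = 2 ^ i - 1 :=
        Nat.add_sub_one_mod_of_dvd hb ((dvd_mul_right _ 2).trans (Nat.dvd_sub_mod p))
      rw [ih, ih, hmid, Nat.mod_eq_mod_mul_two_sub_of_le h, add_comm,
        show p - r + 2 ^ i - 1 - (2 ^ i - 1) = p - r by omega,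
        show p - r + 2 ^ i - 1 + 1 = p - r + 2 ^ i by omega,
        show p - (r - 2 ^ i) = p - r + 2 ^ i by omega]
      exact Finset.sum_Ico_consecutive d (by omega) (by omega)
    · rw [ih, Nat.mod_eq_mod_mul_two_of_lt (not_le.mp h)]

/-- Applying the `k` layers `D` (for block sizes `2^1, …, 2^k`) to an input
array of length `n = 2^k` produces its array of prefix sums. -/
theorem prefix_sum_correct (k : ℕ) (d : ℕ → ℤ) :
    ∀ p < 2 ^ k,
      ((List.range k).foldl (fun acc i => prefixLayer (i + 1) acc) d) p
        = ∑ q ∈ Finset.range (p + 1), d q := by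
  intro p hp
  have h := prefixLayers_apply k d p
  rwa [Nat.mod_eq_of_lt hp, Nat.sub_self, ← Finset.range_eq_Ico] at h
end
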